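/- arXiv:1108.4223 — 4 statements merged into one kernel-verified Lean document; each statement's English description precedes it below -/
import Mathlib

section
/- The axiom of symmetry implies the negation of the continuum hypothesis: if for every function f from the reals to countable sets of reals there exist reals x and y with y ∉ f(x) and x ∉ f(y), then there is no bijection between ℝ and the first uncountable ordinal ω₁. -/
/-- The axiom of symmetry implies the negation of the continuum hypothesis. -/
theorem axiom_of_symmetry_implies_not_CH
    (AS : ∀ f : ℝ → Set ℝ, (∀ x, (f x).Countable) →
      ∃ x y : ℝ, y ∉ f x ∧ x ∉ f y) :
    Cardinal.mk ℝ ≠ Cardinal.aleph 1 := by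
  intro h
  -- Get an equivalence between ℝ and the canonical type of order type ω₁.
  have h2 : Cardinal.mk ℝ = Cardinal.mk (Cardinal.aleph 1).ord.ToType := by
    rw [Cardinal.mk_ord_toType, h]
  obtain ⟨e⟩ := Cardinal.eq.mp h2
  set f : ℝ → Set ℝ := fun x => {y | e y ≤ e x} with hf
  have hcount : ∀ x, (f x).Countable := by
    intro x
    have h3 : f x = e ⁻¹' Set.Iic (e x) := rfl
    have h4 : (Set.Iic (e x)).Countable := by
      have : Set.Iic (e x) = Set.Iio (e x) ∪ {e x} := by
        ext b; simp [le_iff_lt_or_eq]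
      rw [this]
      refine Set.Countable.union ?_ (Set.countable_singleton _)
      rw [Cardinal.countable_iff_lt_aleph_one]
      exact Cardinal.mk_Iio_ord_toType (e x)
    rw [h3]
    exact (h4.image e.symm).mono (by intro y hy; exact ⟨e y, hy, e.symm_apply_apply y⟩)
  obtain ⟨x, y, hyx, hxy⟩ := AS f hcount
  rcases le_total (e y) (e x) with hle | hle
  · exact hyx hle
  · exact hxy hle
end

section
/- The negation of the continuum hypothesis implies the axiom of symmetry: if the cardinality of ℝ is strictly greater than ℵ₁, then for every function f from ℝ to countable sets of reals there exist reals x, y with y ∉ f(x) and x ∉ f(y). -/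
/-- The negation of the continuum hypothesis implies the axiom of symmetry. -/
theorem not_CH_implies_axiom_of_symmetry
    (h : Cardinal.aleph 1 < Cardinal.mk ℝ) :
    ∀ f : ℝ → Set ℝ, (∀ x, (f x).Countable) →
      ∃ x y : ℝ, y ∉ f x ∧ x ∉ f y := by
  intro f hf
  -- choose a set A of reals of cardinality ℵ₁
  obtain ⟨A, hA⟩ := Cardinal.le_mk_iff_exists_set.mp h.le
  -- the union of f over A has cardinality ≤ ℵ₁ < #ℝ
  have hB : Cardinal.mk ↥(⋃ a ∈ A, f a) < Cardinal.mk ℝ := by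
    calc Cardinal.mk ↥(⋃ a ∈ A, f a)
        ≤ Cardinal.mk ↥A * ⨆ a : A, Cardinal.mk ↥(f a) := Cardinal.mk_biUnion_le f A
      _ ≤ Cardinal.aleph 1 * Cardinal.aleph0 := by
          apply mul_le_mul'
          · exact hA.le
          · exact ciSup_le' fun a => (hf a).le_aleph0
      _ ≤ Cardinal.aleph 1 := by
          rw [Cardinal.mul_aleph0_eq (Cardinal.aleph0_le_aleph 1)]
      _ < Cardinal.mk ℝ := h
  -- so the union is not all of ℝ; pick y outside it
  have hne : (⋃ a ∈ A, f a) ≠ Set.univ := by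
    intro heq
    rw [heq, Cardinal.mk_univ] at hB
    exact lt_irrefl _ hB
  obtain ⟨y, hy⟩ := (Set.ne_univ_iff_exists_notMem _).mp hne
  -- A is uncountable, f y is countable, so pick x ∈ A \ f y
  have hx : ¬ A ⊆ f y := by
    intro hsub
    have := (Cardinal.mk_le_mk_of_subset hsub).trans (hf y).le_aleph0
    rw [hA] at this
    exact absurd this (not_le.mpr (Cardinal.aleph0_lt_aleph_one))
  obtain ⟨x, hxA, hxf⟩ := Set.not_subset.mp hx
  refine ⟨x, y, fun hyf => hy ?_, hxf⟩
  exact Set.mem_biUnion hxA hyf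
end

section
/- Freiling's axiom of symmetry is equivalent to the negation of the continuum hypothesis. -/
open Cardinal Ordinal Set

/-- Freiling's axiom of symmetry is equivalent to the negation of CH. -/
theorem axiom_of_symmetry_iff_not_CH :
    (∀ f : ℝ → Set ℝ, (∀ x, (f x).Countable) →
      ∃ x y : ℝ, y ∉ f x ∧ x ∉ f y) ↔ Cardinal.mk ℝ ≠ Cardinal.aleph 1 := by
  constructor
  · -- AS → ¬CH
    intro hAS hCH
    obtain ⟨e⟩ : Nonempty (ℝ ≃ (Cardinal.aleph 1).ord.ToType) := by
      rw [← Cardinal.eq, hCH, Cardinal.mk_ord_toType]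
    set f : ℝ → Set ℝ := fun x => {y | e y ≤ e x} with hf
    have hcnt : ∀ x, (f x).Countable := by
      intro x
      have h1 : Set.Countable {z : (Cardinal.aleph 1).ord.ToType | z < e x} := by
        rw [countable_iff_lt_aleph_one]
        have heq : #{z : (Cardinal.aleph 1).ord.ToType | z < e x}
            = (@Ordinal.typein (Cardinal.aleph 1).ord.ToType (· < ·)
                (@isWellOrder_lt _ _ _) (e x)).card :=
          @Ordinal.card_typein (Cardinal.aleph 1).ord.ToType (· < ·)
            (@isWellOrder_lt _ _ _) (e x)
        rw [heq]
        exact Cardinal.card_typein_toType_lt (Cardinal.aleph 1) (e x)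
      have h2 : Set.Countable {z : (Cardinal.aleph 1).ord.ToType | z ≤ e x} := by
        have : {z : (Cardinal.aleph 1).ord.ToType | z ≤ e x}
            ⊆ insert (e x) {z | z < e x} := by
          intro z hz
          rcases lt_or_eq_of_le (show z ≤ e x from hz) with h | h
          · exact Set.mem_insert_of_mem _ h
          · simp [h]
        exact (h1.insert _).mono this
      have : f x = e ⁻¹' {z | z ≤ e x} := rfl
      rw [this]
      exact h2.preimage e.injective
    obtain ⟨x, y, hy, hx⟩ := hAS f hcnt
    rcases le_total (e x) (e y) with h | h
    · exact hx h
    · exact hy h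
  · -- ¬CH → AS
    intro hCH f hf
    have haleph1 : Cardinal.aleph 1 < #ℝ := by
      rw [Cardinal.mk_real] at hCH ⊢
      exact lt_of_le_of_ne Cardinal.aleph_one_le_continuum (Ne.symm hCH)
    obtain ⟨g⟩ : Nonempty ((Cardinal.aleph 1).ord.ToType ↪ ℝ) := by
      rw [← Cardinal.le_def, Cardinal.mk_ord_toType]
      exact haleph1.le
    set S : Set ℝ := Set.range g ∪ ⋃ a, f (g a) with hS
    have hScard : #S < #ℝ := by
      have h1 : #(Set.range g) ≤ Cardinal.aleph 1 := by
        rw [Cardinal.mk_range_eq _ g.injective, Cardinal.mk_ord_toType]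
      have h2 : #(⋃ a, f (g a)) ≤ Cardinal.aleph 1 := by
        refine (Cardinal.mk_iUnion_le _).trans ?_
        have hsup : (⨆ a, #(f (g a))) ≤ Cardinal.aleph0 :=
          ciSup_le' fun a => (hf (g a)).le_aleph0
        calc #(Cardinal.aleph 1).ord.ToType * ⨆ a, #(f (g a))
            ≤ Cardinal.aleph 1 * Cardinal.aleph0 := by
              apply mul_le_mul'
              · rw [Cardinal.mk_ord_toType]
              · exact hsup
          _ ≤ Cardinal.aleph 1 * Cardinal.aleph 1 :=
              mul_le_mul' le_rfl (Cardinal.aleph0_le_aleph 1)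
          _ = Cardinal.aleph 1 := Cardinal.mul_eq_self ((Cardinal.aleph0_le_aleph 1))
      calc #S ≤ #(Set.range g) + #(⋃ a, f (g a)) := Cardinal.mk_union_le _ _
        _ ≤ Cardinal.aleph 1 + Cardinal.aleph 1 := add_le_add h1 h2
        _ = Cardinal.aleph 1 := Cardinal.add_eq_self (Cardinal.aleph0_le_aleph 1)
        _ < #ℝ := haleph1
    have hSne : S ≠ Set.univ := by
      intro h
      rw [h, Cardinal.mk_univ] at hScard
      exact lt_irrefl _ hScard
    obtain ⟨y, hy⟩ : ∃ y, y ∉ S := by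
      by_contra h
      push_neg at h
      exact hSne (Set.eq_univ_of_forall h)
    have hynr : y ∉ Set.range g := fun h => hy (Set.mem_union_left _ h)
    have hynf : ∀ a, y ∉ f (g a) := fun a h =>
      hy (Set.mem_union_right _ (Set.mem_iUnion.2 ⟨a, h⟩))
    have : ¬ Set.range g ⊆ f y := by
      intro hsub
      have : (Set.range g).Countable := (hf y).mono hsub
      have := this.le_aleph0
      rw [Cardinal.mk_range_eq _ g.injective, Cardinal.mk_ord_toType] at this
      exact absurd this (not_le.2 Cardinal.aleph0_lt_aleph_one)
    obtain ⟨x, hxr, hxf⟩ := Set.not_subset.1 this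
    obtain ⟨a, rfl⟩ := hxr
    exact ⟨g a, y, hynf a, hxf⟩
end

section
/- A function f : ℝ → Set ℝ with all values countable cannot be such that for all x, y either x ∈ f(y) or y ∈ f(x), if ℝ has cardinality greater than ℵ₁. -/
/-- If #ℝ > ℵ₁ then no function from ℝ to countable sets of reals can satisfy
x ∈ f(y) ∨ y ∈ f(x) for all x, y. -/
theorem no_total_countable_covering
    (h : Cardinal.aleph 1 < Cardinal.mk ℝ)
    (f : ℝ → Set ℝ) (hf : ∀ x, (f x).Countable) :
    ¬ ∀ x y : ℝ, x ∈ f y ∨ y ∈ f x := by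
  intro H
  obtain ⟨S, hS⟩ := Cardinal.le_mk_iff_exists_set.mp h.le
  have hU : Cardinal.mk (⋃ x ∈ S, f x) < Cardinal.mk ℝ := by
    calc Cardinal.mk (⋃ x ∈ S, f x)
        ≤ Cardinal.mk S * ⨆ x : S, Cardinal.mk (f x) := Cardinal.mk_biUnion_le _ _
      _ ≤ Cardinal.aleph 1 * Cardinal.aleph0 := by
          apply mul_le_mul'
          · exact hS.le
          · exact ciSup_le' fun x => (hf x).le_aleph0
      _ ≤ Cardinal.aleph 1 := by
          rw [Cardinal.mul_aleph0_eq (Cardinal.aleph0_le_aleph 1)]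
      _ < Cardinal.mk ℝ := h
  have : (⋃ x ∈ S, f x) ≠ Set.univ := by
    intro heq
    rw [heq, Cardinal.mk_univ] at hU
    exact lt_irrefl _ hU
  obtain ⟨y, hy⟩ : ∃ y : ℝ, y ∉ ⋃ x ∈ S, f x := by
    by_contra hc
    push_neg at hc
    exact this (Set.eq_univ_of_forall hc)
  have hsub : S ⊆ f y := by
    intro x hx
    rcases H x y with h1 | h2
    · exact h1
    · exact absurd (Set.mem_biUnion hx h2) hy
  have : Cardinal.aleph 1 ≤ Cardinal.aleph0 := by
    calc Cardinal.aleph 1 = Cardinal.mk S := hS.symm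
      _ ≤ Cardinal.mk (f y) := Cardinal.mk_le_mk_of_subset hsub
      _ ≤ Cardinal.aleph0 := (hf y).le_aleph0
  exact absurd this (by simp [Cardinal.aleph0_lt_aleph_one.not_ge])
end
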